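/- Let α₁, α₂ > 0 and λ₁, λ₂ > 0, and let f ∈ L¹(ℝ²). Then for every (x,y) ∈ ℝ², 𝓕[𝕀₊^{α,λ}f](x,y) = 𝓕f(x,y) · (λ₁ + ix)^{−α₁} (λ₂ + iy)^{−α₂} and 𝓕[𝕀₋^{α,λ}f](x,y) = 𝓕f(x,y) · (λ₁ − ix)^{−α₁} (λ₂ − iy)^{−α₂}, where the complex powers are principal-branch powers. -/

import Mathlib

open MeasureTheory Set Filter Complex Topology

/-- The tempered power kernel: `x ^ p * exp (-(lam * x))` for `x > 0`, and `0` otherwise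
(so `x₊ ^ p` is interpreted as `0` when `x ≤ 0`). -/
noncomputable def tk (p lam x : ℝ) : ℝ := if 0 < x then x ^ p * Real.exp (-(lam * x)) else 0

/-- The left (positive) two-parameter tempered fractional integral
`𝕀₊^{α,λ}f(t,s) = (Γ(α₁)Γ(α₂))⁻¹ ∫_{ℝ²} (t−u)₊^{α₁−1} e^{−λ₁(t−u)₊} (s−v)₊^{α₂−1}
e^{−λ₂(s−v)₊} f(u,v) du dv`. -/
noncomputable def Ip (a1 a2 l1 l2 : ℝ) (f : ℝ × ℝ → ℝ) (t s : ℝ) : ℝ :=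
  (Real.Gamma a1 * Real.Gamma a2)⁻¹ *
    ∫ u : ℝ × ℝ, tk (a1 - 1) l1 (t - u.1) * tk (a2 - 1) l2 (s - u.2) * f u

/-- The right (negative) two-parameter tempered fractional integral
`𝕀₋^{α,λ}f(t,s) = (Γ(α₁)Γ(α₂))⁻¹ ∫_{ℝ²} (u−t)₊^{α₁−1} e^{−λ₁(u−t)₊} (v−s)₊^{α₂−1}
e^{−λ₂(v−s)₊} f(u,v) du dv`. -/
noncomputable def Im (a1 a2 l1 l2 : ℝ) (f : ℝ × ℝ → ℝ) (t s : ℝ) : ℝ :=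
  (Real.Gamma a1 * Real.Gamma a2)⁻¹ *
    ∫ u : ℝ × ℝ, tk (a1 - 1) l1 (u.1 - t) * tk (a2 - 1) l2 (u.2 - s) * f u

/-- The two-dimensional Fourier transform with normalization
`𝓕f(x,y) = (2π)⁻¹ ∫_{ℝ²} e^{−i(xξ₁+yξ₂)} f(ξ₁,ξ₂) dξ₁ dξ₂`. -/
noncomputable def FT2 (f : ℝ × ℝ → ℝ) (x y : ℝ) : ℂ :=
  ((2 * Real.pi)⁻¹ : ℂ) *
    ∫ u : ℝ × ℝ,
      Complex.exp (-(Complex.I * ((x : ℂ) * (u.1 : ℂ) + (y : ℂ) * (u.2 : ℂ)))) * (f u : ℂ)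



lemma integrableOn_pow_exp {p lam : ℝ} (hp : -1 < p) (hl : 0 < lam) :
    IntegrableOn (fun t : ℝ => t ^ p * Real.exp (-(lam * t))) (Ioi 0) := by
  have h := integrableOn_rpow_mul_exp_neg_mul_rpow hp one_pos hl
  refine h.congr_fun (fun t ht => ?_) measurableSet_Ioi
  dsimp only; rw [Real.rpow_one, neg_mul]

lemma tk_integrable {a lam : ℝ} (ha : 0 < a) (hl : 0 < lam) : Integrable (tk (a-1) lam) := by
  have : tk (a-1) lam = Set.indicator (Ioi 0) (fun t => t ^ (a-1) * Real.exp (-(lam * t))) := by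
    funext t; simp [tk, Set.indicator, mem_Ioi]
  rw [this, integrable_indicator_iff measurableSet_Ioi]
  exact integrableOn_pow_exp (by linarith) hl

lemma norm_cexp_neg_mul (s : ℂ) (t : ℝ) : ‖Complex.exp (-(s * t))‖ = Real.exp (-(s.re * t)) := by
  rw [Complex.norm_exp]
  congr 1
  simp [Complex.mul_re]

lemma int_cexp {p : ℝ} (hp : -1 < p) {s : ℂ} (hs : 0 < s.re) :
    IntegrableOn (fun t : ℝ => ((t ^ p : ℝ) : ℂ) * Complex.exp (-(s * t))) (Ioi 0) := by
  refine Integrable.mono' (integrableOn_pow_exp hp hs) ?_ ?_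
  · apply Measurable.aestronglyMeasurable
    exact (Complex.measurable_ofReal.comp (Measurable.pow measurable_id measurable_const : Measurable fun t : ℝ => t ^ p)).mul
      (Complex.measurable_exp.comp (by measurability))
  · filter_upwards [ae_restrict_mem measurableSet_Ioi] with t ht
    rw [norm_mul, norm_cexp_neg_mul, Complex.norm_real, Real.norm_eq_abs,
      _root_.abs_of_nonneg (Real.rpow_nonneg (le_of_lt ht) p)]

lemma sx_re (lam x : ℝ) : ((lam : ℂ) + x * Complex.I).re = lam := by simp

lemma sx_ne (lam : ℝ) (hl : 0 < lam) (x : ℝ) : ((lam : ℂ) + x * Complex.I) ≠ 0 := by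
  intro h
  have := congrArg Complex.re h
  simp at this; linarith

lemma key1 {a lam : ℝ} (ha : 0 < a) (hl : 0 < lam) (x : ℝ) :
    ∫ t : ℝ, Complex.exp (-(Complex.I * ((x : ℂ) * (t : ℂ)))) * (tk (a - 1) lam t : ℂ)
      = (Real.Gamma a : ℂ) * ((lam : ℂ) + (x : ℂ) * Complex.I) ^ (-(a : ℂ)) := by
  set s : ℝ → ℂ := fun x => (lam : ℂ) + x * Complex.I with hs_def
  have hsre : ∀ x, (s x).re = lam := fun x => sx_re lam x
  have hs0 : ∀ x, s x ≠ 0 := fun x => sx_ne lam hl x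
  have hslit : ∀ x, s x ∈ Complex.slitPlane := fun x =>
    Complex.mem_slitPlane_iff.2 (Or.inl (by rw [hsre]; exact hl))
  set φ : ℝ → ℂ := fun x => ∫ t in Ioi 0, ((t ^ (a-1) : ℝ) : ℂ) * Complex.exp (-(s x * t))
    with hφ_def
  set ψ : ℝ → ℂ := fun x => ∫ t in Ioi 0, ((t ^ a : ℝ) : ℂ) * Complex.exp (-(s x * t))
    with hψ_def
  -- Step C : FTC identity
  have hC : ∀ x, (a : ℂ) * φ x = s x * ψ x := by
    intro x
    set σ : ℂ := s x with hσ
    have hσre : 0 < σ.re := by rw [hσ, hsre]; exact hl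
    set F : ℝ → ℂ := fun t => ((t ^ a : ℝ) : ℂ) * Complex.exp (-(σ * t)) with hF
    set F' : ℝ → ℂ := fun t => ((a * t ^ (a-1) : ℝ) : ℂ) * Complex.exp (-(σ * t))
        + ((t ^ a : ℝ) : ℂ) * (-σ * Complex.exp (-(σ * t))) with hF'
    have hderiv : ∀ t ∈ Ioi (0:ℝ), HasDerivAt F (F' t) t := by
      intro t ht
      have h1 : HasDerivAt (fun t : ℝ => ((t ^ a : ℝ) : ℂ)) ((a * t ^ (a-1) : ℝ) : ℂ) t :=
        HasDerivAt.ofReal_comp (Real.hasDerivAt_rpow_const (Or.inl (ne_of_gt ht)))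
      have hinner : HasDerivAt (fun t : ℝ => -(σ * (t : ℂ))) (-σ) t := by
        exact (((Complex.ofRealCLM.hasDerivAt (x := t)).const_mul σ).neg).congr_deriv (by simp)
      have h2 : HasDerivAt (fun t : ℝ => Complex.exp (-(σ * t)))
          (-σ * Complex.exp (-(σ * t))) t := by
        simpa [mul_comm] using hinner.cexp
      exact (h1.mul h2).congr_deriv rfl
    have hcont : ContinuousWithinAt F (Ici 0) 0 := by
      apply ContinuousAt.continuousWithinAt
      apply ContinuousAt.mul
      · exact Complex.continuous_ofReal.continuousAt.comp
          (Real.continuousAt_rpow_const 0 a (Or.inr ha.le))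
      · exact (Complex.continuous_exp.comp (by continuity)).continuousAt
    have hi1 : IntegrableOn (fun t : ℝ => ((a * t ^ (a-1) : ℝ) : ℂ) * Complex.exp (-(σ * t)))
        (Ioi 0) := by
      have h := (int_cexp (p := a - 1) (by linarith) hσre).const_mul (a : ℂ)
      refine IntegrableOn.congr_fun h (fun t ht => ?_) measurableSet_Ioi
      push_cast; ring
    have hi2 : IntegrableOn (fun t : ℝ => ((t ^ a : ℝ) : ℂ) * (-σ * Complex.exp (-(σ * t))))
        (Ioi 0) := by
      have h := (int_cexp (p := a) (by linarith) hσre).const_mul (-σ)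
      refine IntegrableOn.congr_fun h (fun t ht => ?_) measurableSet_Ioi
      push_cast; ring
    have hf'int : IntegrableOn F' (Ioi 0) := hi1.add hi2
    have htop : Tendsto F atTop (𝓝 0) := by
      rw [tendsto_zero_iff_norm_tendsto_zero]
      refine (tendsto_rpow_mul_exp_neg_mul_atTop_nhds_zero a lam hl).congr' ?_
      filter_upwards [eventually_gt_atTop (0:ℝ)] with t ht
      rw [hF, norm_mul, norm_cexp_neg_mul, Complex.norm_real, Real.norm_eq_abs,
        _root_.abs_of_nonneg (Real.rpow_nonneg ht.le a), hσ, hsre, neg_mul]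
    have hF0 : F 0 = 0 := by simp [hF, Real.zero_rpow (ne_of_gt ha)]
    have hFTC := integral_Ioi_of_hasDerivAt_of_tendsto hcont hderiv hf'int htop
    rw [hF0, sub_zero] at hFTC
    have hsplit : ∫ t in Ioi 0, F' t
        = (a : ℂ) * φ x + (-σ) * ψ x := by
      rw [hF']
      rw [integral_add hi1 hi2]
      congr 1
      · rw [hφ_def, ← integral_const_mul]
        refine setIntegral_congr_fun measurableSet_Ioi (fun t ht => ?_)
        push_cast; ring
      · rw [hψ_def, ← integral_const_mul]
        refine setIntegral_congr_fun measurableSet_Ioi (fun t ht => ?_)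
        push_cast; ring
    rw [hFTC] at hsplit
    linear_combination hsplit.symm
  -- Step B : derivative of φ
  have hder : ∀ x, HasDerivAt φ (-Complex.I * ψ x) x := by
    intro x
    have key := hasDerivAt_integral_of_dominated_loc_of_deriv_le (μ := volume.restrict (Ioi 0))
      (F := fun x t => ((t ^ (a-1) : ℝ) : ℂ) * Complex.exp (-(s x * t)))
      (F' := fun x t => ((t ^ (a-1) : ℝ) : ℂ) * (-(Complex.I * t) * Complex.exp (-(s x * t))))
      (x₀ := x) (bound := fun t => t ^ a * Real.exp (-(lam * t))) (Metric.ball_mem_nhds x one_pos)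
      ?_ ?_ ?_ ?_ ?_ ?_
    · have heq : (∫ t in Ioi 0,
          ((t ^ (a-1) : ℝ) : ℂ) * (-(Complex.I * t) * Complex.exp (-(s x * t))))
          = -Complex.I * ψ x := by
        rw [hψ_def, ← integral_const_mul]
        refine setIntegral_congr_fun measurableSet_Ioi (fun t ht => ?_)
        have : (t : ℝ) ^ a = t ^ (a - 1) * t := by
          rw [← Real.rpow_add_one (ne_of_gt ht) (a-1), sub_add_cancel]
        rw [this]; push_cast; ring
      rw [heq] at key
      exact key.2
    · filter_upwards with x'
      apply Measurable.aestronglyMeasurable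
      exact (Complex.measurable_ofReal.comp
          (Measurable.pow measurable_id measurable_const : Measurable fun t : ℝ => t ^ (a-1))).mul
        (Complex.measurable_exp.comp (by measurability))
    · exact int_cexp (by linarith) (by rw [hsre]; exact hl)
    · apply Measurable.aestronglyMeasurable
      refine (Complex.measurable_ofReal.comp
          (Measurable.pow measurable_id measurable_const : Measurable fun t : ℝ => t ^ (a-1))).mul
        (Measurable.mul ?_ (Complex.measurable_exp.comp (by measurability)))
      measurability
    · filter_upwards [ae_restrict_mem measurableSet_Ioi] with t ht x' _
      have h1 : (t : ℝ) ^ a = t ^ (a - 1) * t := by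
        rw [← Real.rpow_add_one (ne_of_gt ht) (a-1), sub_add_cancel]
      rw [norm_mul, norm_mul, norm_cexp_neg_mul, hsre, Complex.norm_real, Real.norm_eq_abs,
        _root_.abs_of_nonneg (Real.rpow_nonneg (le_of_lt ht) _), norm_neg, norm_mul,
        Complex.norm_I, one_mul, Complex.norm_real, Real.norm_eq_abs,
        _root_.abs_of_nonneg (le_of_lt ht), h1]
      ring_nf
      exact le_rfl
    · exact integrableOn_pow_exp (by linarith) hl
    · filter_upwards [ae_restrict_mem measurableSet_Ioi] with t ht x' _
      have harg : ∀ x' : ℝ, -(s x' * t) = (-(lam * t) : ℝ) + (x' : ℝ) * (-(Complex.I * t)) := by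
        intro x'; rw [hs_def]; push_cast; ring
      have hinner : HasDerivAt (fun x' : ℝ => ((-(lam * t) : ℝ) : ℂ) + (x' : ℂ) * (-(Complex.I * t)))
          (-(Complex.I * t)) x' := by
        simpa using ((Complex.ofRealCLM.hasDerivAt (x := x')).mul_const
          (-(Complex.I * t))).const_add ((-(lam * t) : ℝ) : ℂ)
      have hder1 := (hinner.cexp).const_mul (((t : ℝ) ^ (a-1) : ℝ) : ℂ)
      have hfun : (fun x'' : ℝ => (((t:ℝ) ^ (a-1) : ℝ) : ℂ) *
            Complex.exp (((-(lam * t) : ℝ) : ℂ) + (x'' : ℂ) * (-(Complex.I * t))))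
          = fun x'' : ℝ => (((t:ℝ) ^ (a-1) : ℝ) : ℂ) * Complex.exp (-(s x'' * t)) := by
        funext u; rw [harg u]
      rw [hfun] at hder1
      refine hder1.congr_deriv ?_
      rw [harg x']; ring
  -- Step D : constancy
  have hh : ∀ x, HasDerivAt (fun x => (s x) ^ (a : ℂ) * φ x) 0 x := by
    intro x
    have hsder : HasDerivAt s Complex.I x := by
      rw [hs_def]
      simpa using ((Complex.ofRealCLM.hasDerivAt (x := x)).mul_const Complex.I).const_add (lam : ℂ)
    have d1 : HasDerivAt (fun x => (s x) ^ (a : ℂ))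
        ((a : ℂ) * (s x) ^ ((a : ℂ) - 1) * Complex.I) x := by
      have hcp := (Complex.hasStrictDerivAt_cpow_const (c := (a : ℂ)) (hslit x)).hasDerivAt
      exact (HasDerivAt.scomp x hcp hsder).congr_deriv (by rw [smul_eq_mul]; ring)
    refine (d1.mul (hder x)).congr_deriv ?_
    have hsa : (s x) ^ (a : ℂ) = (s x) ^ ((a : ℂ) - 1) * s x := by
      conv_lhs => rw [show (a : ℂ) = ((a : ℂ) - 1) + 1 by ring]
      rw [Complex.cpow_add _ _ (hs0 x), Complex.cpow_one]
    rw [hsa]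
    linear_combination (Complex.I * (s x) ^ ((a : ℂ) - 1)) * (hC x)
  have hconst : ∀ x, (s x) ^ (a : ℂ) * φ x = (s 0) ^ (a : ℂ) * φ 0 := fun x =>
    is_const_of_deriv_eq_zero (fun y => (hh y).differentiableAt) (fun y => (hh y).deriv) x 0
  -- value at 0
  have hs0v : s 0 = (lam : ℂ) := by rw [hs_def]; simp
  have hφ0 : φ 0 = (Real.Gamma a : ℂ) * (lam : ℂ) ^ (-(a : ℂ)) := by
    have h1 : φ 0 = ∫ t : ℝ in Ioi 0,
        (t : ℂ) ^ ((a : ℂ) - 1) * Complex.exp (-((lam : ℂ) * (t : ℂ))) := by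
      rw [hφ_def]
      refine setIntegral_congr_fun measurableSet_Ioi (fun t ht => ?_)
      rw [hs0v, Complex.ofReal_cpow (le_of_lt ht)]
      push_cast
      ring_nf
    rw [h1, integral_cpow_mul_exp_neg_mul_Ioi (by simpa using ha) hl]
    rw [Complex.Gamma_ofReal, one_div, Complex.inv_cpow _ _ (by
      rw [Complex.arg_ofReal_of_nonneg hl.le]; exact Ne.symm Real.pi_ne_zero), ← Complex.cpow_neg]
    ring
  -- combine : φ x = Γ a * (s x) ^ (-a)
  have hlamne : ((lam : ℂ)) ≠ 0 := Complex.ofReal_ne_zero.2 (ne_of_gt hl)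
  have hlam_pow_ne : (lam : ℂ) ^ (a : ℂ) ≠ 0 := by
    simp [Complex.cpow_eq_zero_iff, hlamne]
  have hsx_pow_ne : (s x) ^ (a : ℂ) ≠ 0 := by
    simp [Complex.cpow_eq_zero_iff, hs0 x]
  have hval : (s x) ^ (a : ℂ) * φ x = (Real.Gamma a : ℂ) := by
    rw [hconst x, hs0v, hφ0, Complex.cpow_neg]
    field_simp
  have hφx : φ x = (Real.Gamma a : ℂ) * (s x) ^ (-(a : ℂ)) := by
    rw [Complex.cpow_neg]
    field_simp
    linear_combination hval
  -- rewrite the statement integral as φ x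
  have hind : (fun t : ℝ => Complex.exp (-(Complex.I * ((x : ℂ) * (t : ℂ)))) * (tk (a - 1) lam t : ℂ))
      = Set.indicator (Ioi 0) (fun t : ℝ => ((t ^ (a-1) : ℝ) : ℂ) * Complex.exp (-(s x * t))) := by
    funext t
    by_cases ht : (0:ℝ) < t
    · rw [Set.indicator_of_mem (mem_Ioi.2 ht)]
      rw [tk, if_pos ht]
      push_cast [Complex.ofReal_exp]
      rw [mul_comm, mul_assoc, ← Complex.exp_add]
      congr 2
      rw [hs_def]
      push_cast
      ring
    · rw [Set.indicator_of_notMem (fun h => ht (mem_Ioi.1 h)), tk, if_neg ht]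
      simp
  rw [hind, integral_indicator measurableSet_Ioi]
  exact hφx

noncomputable def Ee (x y : ℝ) (w : ℝ × ℝ) : ℂ :=
  Complex.exp (-(Complex.I * ((x : ℂ) * (w.1 : ℂ) + (y : ℂ) * (w.2 : ℂ))))

lemma Ee_norm (x y : ℝ) (w : ℝ × ℝ) : ‖Ee x y w‖ = 1 := by
  rw [Ee, Complex.norm_exp]
  have : (-(Complex.I * ((x : ℂ) * (w.1 : ℂ) + (y : ℂ) * (w.2 : ℂ)))).re = 0 := by
    simp [Complex.mul_re]
  rw [this, Real.exp_zero]

lemma Ee_cont (x y : ℝ) : Continuous (Ee x y) := by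
  unfold Ee; continuity

lemma Ee_add (x y : ℝ) (w u : ℝ × ℝ) : Ee x y (w + u) = Ee x y w * Ee x y u := by
  rw [Ee, Ee, Ee, ← Complex.exp_add]
  congr 1
  push_cast [Prod.fst_add, Prod.snd_add]
  ring

lemma conv_int (x y : ℝ) (K g : ℝ × ℝ → ℝ) (hK : Integrable K) (hg : Integrable g) :
    ∫ w : ℝ × ℝ, Ee x y w * ((∫ u : ℝ × ℝ, K (w - u) * g u : ℝ) : ℂ)
      = (∫ w : ℝ × ℝ, Ee x y w * (K w : ℂ)) * ∫ u : ℝ × ℝ, Ee x y u * (g u : ℂ) := by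
  have hKg : Integrable (fun p : (ℝ × ℝ) × (ℝ × ℝ) => K (p.1 - p.2) * g p.2)
      ((volume : Measure (ℝ × ℝ)).prod volume) := by
    have h1 : Integrable (fun p : (ℝ × ℝ) × (ℝ × ℝ) => K p.1 * g p.2)
        ((volume : Measure (ℝ × ℝ)).prod volume) := hK.mul_prod hg
    have hT : MeasurePreserving (fun p : (ℝ × ℝ) × (ℝ × ℝ) => (p.1 - p.2, p.2))
        ((volume : Measure (ℝ × ℝ)).prod volume) ((volume : Measure (ℝ × ℝ)).prod volume) :=
      measurePreserving_sub_prod volume volume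
    exact (hT.integrable_comp h1.aestronglyMeasurable).2 h1
  have hFull : Integrable (fun p : (ℝ × ℝ) × (ℝ × ℝ) =>
      Ee x y p.1 * ((K (p.1 - p.2) * g p.2 : ℝ) : ℂ)) ((volume : Measure (ℝ × ℝ)).prod volume) :=
    Integrable.bdd_mul (c := 1) hKg.ofReal (((Ee_cont x y).comp continuous_fst).aestronglyMeasurable)
      (Filter.Eventually.of_forall fun p => le_of_eq (Ee_norm x y p.1))
  calc ∫ w : ℝ × ℝ, Ee x y w * ((∫ u : ℝ × ℝ, K (w - u) * g u : ℝ) : ℂ)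
      = ∫ w : ℝ × ℝ, ∫ u : ℝ × ℝ, Ee x y w * ((K (w - u) * g u : ℝ) : ℂ) := by
        congr 1; funext w
        have hcast : ((∫ u : ℝ × ℝ, K (w - u) * g u : ℝ) : ℂ)
            = ∫ u : ℝ × ℝ, ((K (w - u) * g u : ℝ) : ℂ) := integral_ofReal.symm
        rw [hcast, ← integral_const_mul]
    _ = ∫ u : ℝ × ℝ, ∫ w : ℝ × ℝ, Ee x y w * ((K (w - u) * g u : ℝ) : ℂ) :=
        integral_integral_swap hFull
    _ = ∫ u : ℝ × ℝ, (g u : ℂ) * (Ee x y u * ∫ w : ℝ × ℝ, Ee x y w * (K w : ℂ)) := by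
        congr 1; funext u
        have h1 : ∫ w : ℝ × ℝ, Ee x y w * ((K (w - u) * g u : ℝ) : ℂ)
            = (g u : ℂ) * ∫ w : ℝ × ℝ, Ee x y w * ((K (w - u) : ℝ) : ℂ) := by
          rw [← integral_const_mul]
          congr 1; funext w; push_cast; ring
        rw [h1]
        congr 1
        have h2 : ∫ w : ℝ × ℝ, Ee x y w * ((K (w - u) : ℝ) : ℂ)
            = ∫ w : ℝ × ℝ, Ee x y (w + u) * ((K (w + u - u) : ℝ) : ℂ) :=
          (integral_add_right_eq_self (fun w => Ee x y w * ((K (w - u) : ℝ) : ℂ)) u).symm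
        rw [h2]
        rw [← integral_const_mul]
        congr 1; funext w
        rw [add_sub_cancel_right, Ee_add]
        ring
    _ = (∫ w : ℝ × ℝ, Ee x y w * (K w : ℂ)) * ∫ u : ℝ × ℝ, Ee x y u * (g u : ℂ) := by
        rw [← integral_const_mul]
        congr 1; funext u
        ring

lemma FT2_eq (f : ℝ × ℝ → ℝ) (x y : ℝ) :
    FT2 f x y = ((2 * Real.pi)⁻¹ : ℂ) * ∫ u : ℝ × ℝ, Ee x y u * (f u : ℂ) := rfl

lemma kernel_prod_int {a1 a2 l1 l2 : ℝ} (ha1 : 0 < a1) (ha2 : 0 < a2)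
    (hl1 : 0 < l1) (hl2 : 0 < l2) (x y : ℝ) :
    ∫ w : ℝ × ℝ, Ee x y w * ((tk (a1 - 1) l1 w.1 * tk (a2 - 1) l2 w.2 : ℝ) : ℂ)
      = ((Real.Gamma a1 : ℂ) * ((l1 : ℂ) + (x : ℂ) * Complex.I) ^ (-(a1 : ℂ))) *
        ((Real.Gamma a2 : ℂ) * ((l2 : ℂ) + (y : ℂ) * Complex.I) ^ (-(a2 : ℂ))) := by
  have hsplit : ∀ w : ℝ × ℝ, Ee x y w * ((tk (a1 - 1) l1 w.1 * tk (a2 - 1) l2 w.2 : ℝ) : ℂ)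
      = (Complex.exp (-(Complex.I * ((x : ℂ) * (w.1 : ℂ)))) * (tk (a1 - 1) l1 w.1 : ℂ)) *
        (Complex.exp (-(Complex.I * ((y : ℂ) * (w.2 : ℂ)))) * (tk (a2 - 1) l2 w.2 : ℂ)) := by
    intro w
    rw [Ee]
    rw [show -(Complex.I * ((x : ℂ) * (w.1 : ℂ) + (y : ℂ) * (w.2 : ℂ)))
        = -(Complex.I * ((x : ℂ) * (w.1 : ℂ))) + -(Complex.I * ((y : ℂ) * (w.2 : ℂ))) by ring,
      Complex.exp_add]
    push_cast
    ring
  simp_rw [hsplit]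
  rw [show (volume : Measure (ℝ × ℝ)) = (volume : Measure ℝ).prod volume from
    Measure.volume_eq_prod ℝ ℝ]
  rw [MeasureTheory.integral_prod_mul
    (f := fun t : ℝ => Complex.exp (-(Complex.I * ((x : ℂ) * (t : ℂ)))) * (tk (a1 - 1) l1 t : ℂ))
    (g := fun t : ℝ => Complex.exp (-(Complex.I * ((y : ℂ) * (t : ℂ)))) * (tk (a2 - 1) l2 t : ℂ))]
  rw [key1 ha1 hl1 x, key1 ha2 hl2 y]

theorem main_plus (a1 a2 l1 l2 : ℝ)
    (ha1 : 0 < a1) (ha2 : 0 < a2) (hl1 : 0 < l1) (hl2 : 0 < l2)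
    (f : ℝ × ℝ → ℝ) (hf : Integrable f) (x y : ℝ) :
    FT2 (fun u => (Real.Gamma a1 * Real.Gamma a2)⁻¹ *
        ∫ v : ℝ × ℝ, tk (a1 - 1) l1 (u.1 - v.1) * tk (a2 - 1) l2 (u.2 - v.2) * f v) x y
      = FT2 f x y * ((l1 : ℂ) + (x : ℂ) * Complex.I) ^ (-(a1 : ℂ)) *
          ((l2 : ℂ) + (y : ℂ) * Complex.I) ^ (-(a2 : ℂ)) := by
  set K : ℝ × ℝ → ℝ := fun v => tk (a1 - 1) l1 v.1 * tk (a2 - 1) l2 v.2 with hK_def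
  have hKint : Integrable K := by
    rw [show (volume : Measure (ℝ × ℝ)) = (volume : Measure ℝ).prod volume from
      Measure.volume_eq_prod ℝ ℝ]
    exact (tk_integrable ha1 hl1).mul_prod (tk_integrable ha2 hl2)
  set c : ℝ := (Real.Gamma a1 * Real.Gamma a2)⁻¹ with hc_def
  have hIp : ∀ w : ℝ × ℝ, (c * ∫ v : ℝ × ℝ, tk (a1 - 1) l1 (w.1 - v.1) *
      tk (a2 - 1) l2 (w.2 - v.2) * f v) = c * ∫ v : ℝ × ℝ, K (w - v) * f v := by
    intro w
    have : ∀ v : ℝ × ℝ, tk (a1 - 1) l1 (w.1 - v.1) * tk (a2 - 1) l2 (w.2 - v.2) * f v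
        = K (w - v) * f v := by
      intro v; simp [hK_def, mul_assoc]
    rw [integral_congr_ae (Filter.Eventually.of_forall this)]
  have step1 : FT2 (fun u => c *
      ∫ v : ℝ × ℝ, tk (a1 - 1) l1 (u.1 - v.1) * tk (a2 - 1) l2 (u.2 - v.2) * f v) x y
      = ((2 * Real.pi)⁻¹ : ℂ) * ((c : ℂ) *
          ∫ w : ℝ × ℝ, Ee x y w * ((∫ v : ℝ × ℝ, K (w - v) * f v : ℝ) : ℂ)) := by
    rw [FT2_eq]
    congr 1
    rw [← integral_const_mul]
    congr 1; funext w
    rw [hIp w]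
    push_cast
    ring
  rw [step1, conv_int x y K f hKint hf, kernel_prod_int ha1 ha2 hl1 hl2 x y, FT2_eq]
  have hG1 : (Real.Gamma a1 : ℂ) ≠ 0 :=
    Complex.ofReal_ne_zero.2 (ne_of_gt (Real.Gamma_pos_of_pos ha1))
  have hG2 : (Real.Gamma a2 : ℂ) ≠ 0 :=
    Complex.ofReal_ne_zero.2 (ne_of_gt (Real.Gamma_pos_of_pos ha2))
  rw [hc_def]
  have hpi : (2 * (Real.pi : ℂ)) ≠ 0 := by
    simp [Real.pi_ne_zero]
  push_cast
  field_simp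

theorem main_minus (a1 a2 l1 l2 : ℝ)
    (ha1 : 0 < a1) (ha2 : 0 < a2) (hl1 : 0 < l1) (hl2 : 0 < l2)
    (f : ℝ × ℝ → ℝ) (hf : Integrable f) (x y : ℝ) :
    FT2 (fun u => (Real.Gamma a1 * Real.Gamma a2)⁻¹ *
        ∫ v : ℝ × ℝ, tk (a1 - 1) l1 (v.1 - u.1) * tk (a2 - 1) l2 (v.2 - u.2) * f v) x y
      = FT2 f x y * ((l1 : ℂ) - (x : ℂ) * Complex.I) ^ (-(a1 : ℂ)) *
          ((l2 : ℂ) - (y : ℂ) * Complex.I) ^ (-(a2 : ℂ)) := by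
  set K : ℝ × ℝ → ℝ := fun v => tk (a1 - 1) l1 v.1 * tk (a2 - 1) l2 v.2 with hK_def
  have hKint : Integrable K := by
    rw [show (volume : Measure (ℝ × ℝ)) = (volume : Measure ℝ).prod volume from
      Measure.volume_eq_prod ℝ ℝ]
    exact (tk_integrable ha1 hl1).mul_prod (tk_integrable ha2 hl2)
  set K' : ℝ × ℝ → ℝ := fun p => K (-p) with hK'_def
  have hK'int : Integrable K' :=
    ((Measure.measurePreserving_neg (volume : Measure (ℝ × ℝ))).integrable_comp
      hKint.aestronglyMeasurable).2 hKint
  set c : ℝ := (Real.Gamma a1 * Real.Gamma a2)⁻¹ with hc_def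
  have hIp : ∀ w : ℝ × ℝ, (c * ∫ v : ℝ × ℝ, tk (a1 - 1) l1 (v.1 - w.1) *
      tk (a2 - 1) l2 (v.2 - w.2) * f v) = c * ∫ v : ℝ × ℝ, K' (w - v) * f v := by
    intro w
    have : ∀ v : ℝ × ℝ, tk (a1 - 1) l1 (v.1 - w.1) * tk (a2 - 1) l2 (v.2 - w.2) * f v
        = K' (w - v) * f v := by
      intro v; simp [hK'_def, hK_def, mul_assoc, neg_sub]
    rw [integral_congr_ae (Filter.Eventually.of_forall this)]
  have step1 : FT2 (fun u => c *
      ∫ v : ℝ × ℝ, tk (a1 - 1) l1 (v.1 - u.1) * tk (a2 - 1) l2 (v.2 - u.2) * f v) x y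
      = ((2 * Real.pi)⁻¹ : ℂ) * ((c : ℂ) *
          ∫ w : ℝ × ℝ, Ee x y w * ((∫ v : ℝ × ℝ, K' (w - v) * f v : ℝ) : ℂ)) := by
    rw [FT2_eq]
    congr 1
    rw [← integral_const_mul]
    congr 1; funext w
    rw [hIp w]
    push_cast
    ring
  have hKer : ∫ w : ℝ × ℝ, Ee x y w * ((K' w : ℝ) : ℂ)
      = ((Real.Gamma a1 : ℂ) * ((l1 : ℂ) - (x : ℂ) * Complex.I) ^ (-(a1 : ℂ))) *
        ((Real.Gamma a2 : ℂ) * ((l2 : ℂ) - (y : ℂ) * Complex.I) ^ (-(a2 : ℂ))) := by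
    have hflip : ∫ w : ℝ × ℝ, Ee x y w * ((K' w : ℝ) : ℂ)
        = ∫ w : ℝ × ℝ, Ee (-x) (-y) w * ((K w : ℝ) : ℂ) := by
      rw [← integral_neg_eq_self (fun w : ℝ × ℝ => Ee (-x) (-y) w * ((K w : ℝ) : ℂ))]
      congr 1; funext w
      rw [hK'_def]
      congr 1
      rw [Ee, Ee]
      congr 1
      push_cast [Prod.fst_neg, Prod.snd_neg]
      ring
    rw [hflip, hK_def]
    have := kernel_prod_int ha1 ha2 hl1 hl2 (-x) (-y)
    rw [this]
    congr 3
    · push_cast; ring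
    · push_cast; ring
  rw [step1, conv_int x y K' f hK'int hf, hKer, FT2_eq]
  have hG1 : (Real.Gamma a1 : ℂ) ≠ 0 :=
    Complex.ofReal_ne_zero.2 (ne_of_gt (Real.Gamma_pos_of_pos ha1))
  have hG2 : (Real.Gamma a2 : ℂ) ≠ 0 :=
    Complex.ofReal_ne_zero.2 (ne_of_gt (Real.Gamma_pos_of_pos ha2))
  rw [hc_def]
  have hpi : (2 * (Real.pi : ℂ)) ≠ 0 := by
    simp [Real.pi_ne_zero]
  push_cast
  field_simp

/-- for `f ∈ L¹(ℝ²)` and all `(x,y)`,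
`𝓕[𝕀₊^{α,λ}f](x,y) = 𝓕f(x,y)·(λ₁+ix)^{−α₁}(λ₂+iy)^{−α₂}` and
`𝓕[𝕀₋^{α,λ}f](x,y) = 𝓕f(x,y)·(λ₁−ix)^{−α₁}(λ₂−iy)^{−α₂}`,
with principal-branch complex powers. -/
theorem fourier_tempered_fractional_integral (a1 a2 l1 l2 : ℝ)
    (ha1 : 0 < a1) (ha2 : 0 < a2) (hl1 : 0 < l1) (hl2 : 0 < l2)
    (f : ℝ × ℝ → ℝ) (hf : Integrable f) (x y : ℝ) :
    FT2 (fun u => Ip a1 a2 l1 l2 f u.1 u.2) x y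
      = FT2 f x y * ((l1 : ℂ) + (x : ℂ) * Complex.I) ^ (-(a1 : ℂ)) *
          ((l2 : ℂ) + (y : ℂ) * Complex.I) ^ (-(a2 : ℂ)) ∧
    FT2 (fun u => Im a1 a2 l1 l2 f u.1 u.2) x y
      = FT2 f x y * ((l1 : ℂ) - (x : ℂ) * Complex.I) ^ (-(a1 : ℂ)) *
          ((l2 : ℂ) - (y : ℂ) * Complex.I) ^ (-(a2 : ℂ)) := by
  constructor
  · exact main_plus a1 a2 l1 l2 ha1 ha2 hl1 hl2 f hf x y
  · exact main_minus a1 a2 l1 l2 ha1 ha2 hl1 hl2 f hf x y
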